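/- arXiv:2112.13718 — 6 statements merged into one kernel-verified Lean document; each statement's English description precedes it below -/
import Mathlib

section
/- Let f = (h₀,h₁,h₂,q₀,q₁,q₂) ∈ ℱ. The map τ₂ is a well-defined involution of V(f): for every (i,j) ∈ V(f) one has τ₂(τ₂(i,j)) = (i,j); moreover the first branch sends (i,j) into C_{i+1}, the second branch sends it into C_{i−1}, so the first coordinate of τ₂(i,j) is always different from i and in particular τ₂ has no fixed points. -/
/-- `Ltwo h i` is `2·l_i = h_{i-1} + h_i`, the length of the cycle `C_i`. -/
abbrev Ltwo (h : ZMod 3 → ℕ) (i : ZMod 3) : ℕ := h (i - 1) + h i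

/-- The vertex set `V(f) = Σ_{i ∈ ℤ/3} ℤ/(2l_i)` of the coloured graph `Γ(f)`. -/
abbrev Vf (h : ZMod 3 → ℕ) : Type := Σ i : ZMod 3, ZMod (Ltwo h i)

/-- The admissibility conditions defining the class ℱ of 6-tuples
`f = (h₀,h₁,h₂,q₀,q₁,q₂)` (the condition `0 ≤ qᵢ` is automatic in `ℕ`). -/
structure AdmissibleF (h q : ZMod 3 → ℕ) : Prop where
  even_sum : ∀ i, Even (h i + h (i + 1))
  q_lt : ∀ i, q i < Ltwo h i
  parity : ∀ i j, q i % 2 = q j % 2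
  odd_hq : ∀ i, Odd (h i + q i)
  zero_unique : ∀ i j, h i = 0 → h j = 0 → i = j

/-- `τ₀(i,j) = (i, j + (−1)^ĵ)`. -/
def tau0 (h : ZMod 3 → ℕ) : Vf h → Vf h
  | ⟨i, j⟩ => ⟨i, j + (-1 : ZMod (Ltwo h i)) ^ j.val⟩

/-- `τ₁(i,j) = (i, j − (−1)^ĵ)`. -/
def tau1 (h : ZMod 3 → ℕ) : Vf h → Vf h
  | ⟨i, j⟩ => ⟨i, j - (-1 : ZMod (Ltwo h i)) ^ j.val⟩

/-- `τ₂(i,j) = (i+1, (−ĵ−1) mod 2l_{i+1})` if `ĵ < h_i`, and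
`τ₂(i,j) = (i−1, (2l_i−ĵ−1) mod 2l_{i−1})` if `ĵ ≥ h_i`. -/
def tau2 (h : ZMod 3 → ℕ) : Vf h → Vf h
  | ⟨i, j⟩ =>
    if j.val < h i then
      ⟨i + 1, ((-(j.val : ℤ) - 1 : ℤ) : ZMod (Ltwo h (i + 1)))⟩
    else
      ⟨i - 1, ((Ltwo h i - j.val - 1 : ℕ) : ZMod (Ltwo h (i - 1)))⟩

/-- `ρ(i,j) = (i, j + q_i)`. -/
def rho (h q : ZMod 3 → ℕ) : Vf h → Vf h
  | ⟨i, j⟩ => ⟨i, j + (q i : ZMod (Ltwo h i))⟩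

/-- `ρ⁻¹(i,j) = (i, j − q_i)`. -/
def rhoInv (h q : ZMod 3 → ℕ) : Vf h → Vf h
  | ⟨i, j⟩ => ⟨i, j - (q i : ZMod (Ltwo h i))⟩

/-- `τ₃ = ρ ∘ τ₂ ∘ ρ⁻¹`. -/
def tau3 (h q : ZMod 3 → ℕ) : Vf h → Vf h :=
  rho h q ∘ tau2 h ∘ rhoInv h q

/-- Auxiliary: a negative-style integer cast equals a natural cast mod `L`. -/
lemma negCast_eq_natCast (L n : ℕ) (hn : n < L) :
    ((-(n : ℤ) - 1 : ℤ) : ZMod L) = ((L - n - 1 : ℕ) : ZMod L) := by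
  have key : (-(n : ℤ) - 1) = ((L - n - 1 : ℕ) : ℤ) + (-(L : ℤ)) := by omega
  rw [key, Int.cast_add, Int.cast_neg, Int.cast_natCast, Int.cast_natCast,
    ZMod.natCast_self, neg_zero, add_zero]

/-- Auxiliary: sigma-equality transporting a natural cast along an index equality. -/
lemma sigma_nat_eq (h : ZMod 3 → ℕ) {i i' : ZMod 3} (e : i' = i) (n : ℕ)
    {j : ZMod (Ltwo h i)} (hv : (n : ZMod (Ltwo h i)) = j) :
    (⟨i', (n : ZMod (Ltwo h i'))⟩ : Vf h) = ⟨i, j⟩ := by subst e; rw [hv]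

/-- Auxiliary: sigma-equality transporting an integer cast along an index equality. -/
lemma sigma_int_eq (h : ZMod 3 → ℕ) {i i' : ZMod 3} (e : i' = i) (n : ℤ)
    {j : ZMod (Ltwo h i)} (hv : (n : ZMod (Ltwo h i)) = j) :
    (⟨i', (n : ZMod (Ltwo h i'))⟩ : Vf h) = ⟨i, j⟩ := by subst e; rw [hv]

/-- `τ₂` is a well-defined involution of `V(f)`; its first branch sends
`C_i` into `C_{i+1}`, its second branch into `C_{i−1}`, so the first coordinate always
changes and `τ₂` has no fixed points. -/
theorem tau2_involutive_fixedPointFree (h q : ZMod 3 → ℕ) (hf : AdmissibleF h q) :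
    (∀ v : Vf h, tau2 h (tau2 h v) = v) ∧
    (∀ v : Vf h, v.2.val < h v.1 → (tau2 h v).1 = v.1 + 1) ∧
    (∀ v : Vf h, h v.1 ≤ v.2.val → (tau2 h v).1 = v.1 - 1) ∧
    (∀ v : Vf h, (tau2 h v).1 ≠ v.1) ∧
    (∀ v : Vf h, tau2 h v ≠ v) := by
  have pos : ∀ i, 0 < Ltwo h i := fun i => Nat.pos_of_ne_zero (by
    have := hf.q_lt i; omega)
  have fst1 : ∀ v : Vf h, v.2.val < h v.1 → (tau2 h v).1 = v.1 + 1 := by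
    rintro ⟨i, j⟩ hj
    simp only [tau2, if_pos hj]
  have fst2 : ∀ v : Vf h, h v.1 ≤ v.2.val → (tau2 h v).1 = v.1 - 1 := by
    rintro ⟨i, j⟩ hj
    simp only [tau2, if_neg (not_lt.mpr hj)]
  have fstne : ∀ v : Vf h, (tau2 h v).1 ≠ v.1 := by
    intro v
    rcases lt_or_ge v.2.val (h v.1) with hc | hc
    · rw [fst1 v hc]
      intro H
      exact one_ne_zero (left_eq_add.mp H.symm)
    · rw [fst2 v hc]
      intro H
      exact one_ne_zero (sub_eq_self.mp H)
  refine ⟨?_, fst1, fst2, fstne, fun v hv => fstne v (by rw [hv])⟩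
  rintro ⟨i, j⟩
  haveI : NeZero (Ltwo h i) := ⟨(pos i).ne'⟩
  haveI : NeZero (Ltwo h (i + 1)) := ⟨(pos (i + 1)).ne'⟩
  haveI : NeZero (Ltwo h (i - 1)) := ⟨(pos (i - 1)).ne'⟩
  have hjlt : j.val < Ltwo h i := ZMod.val_lt j
  have hLi : Ltwo h i = h (i - 1) + h i := rfl
  have e1 : (i + 1) - 1 = i := add_sub_cancel_right i 1
  have e2 : (i - 1) + 1 = i := sub_add_cancel i 1
  have hL1 : Ltwo h (i + 1) = h i + h (i + 1) := by rw [Ltwo, e1]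
  have hL2 : Ltwo h (i - 1) = h (i - 1 - 1) + h (i - 1) := rfl
  by_cases hj : j.val < h i
  · -- first branch
    have step1 : tau2 h ⟨i, j⟩
        = ⟨i + 1, ((-(j.val : ℤ) - 1 : ℤ) : ZMod (Ltwo h (i + 1)))⟩ := by
      rw [tau2, if_pos hj]
    have hjL1 : j.val < Ltwo h (i + 1) := by omega
    have hw : ((-(j.val : ℤ) - 1 : ℤ) : ZMod (Ltwo h (i + 1)))
        = ((Ltwo h (i + 1) - j.val - 1 : ℕ) : ZMod (Ltwo h (i + 1))) :=
      negCast_eq_natCast _ _ hjL1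
    have hwval : ((-(j.val : ℤ) - 1 : ℤ) : ZMod (Ltwo h (i + 1))).val
        = Ltwo h (i + 1) - j.val - 1 := by
      rw [hw, ZMod.val_cast_of_lt (by omega)]
    rw [step1, tau2]
    rw [if_neg (by rw [hwval]; omega)]
    refine sigma_nat_eq h e1 _ ?_
    rw [hwval]
    have : Ltwo h (i + 1) - (Ltwo h (i + 1) - j.val - 1) - 1 = j.val := by omega
    rw [this, ZMod.natCast_val, ZMod.cast_id]
  · -- second branch
    push_neg at hj
    have step1 : tau2 h ⟨i, j⟩
        = ⟨i - 1, ((Ltwo h i - j.val - 1 : ℕ) : ZMod (Ltwo h (i - 1)))⟩ := by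
      rw [tau2, if_neg (not_lt.mpr hj)]
    have hn1 : Ltwo h i - j.val - 1 < h (i - 1) := by omega
    have hn2 : Ltwo h i - j.val - 1 < Ltwo h (i - 1) := by omega
    have hwval : ((Ltwo h i - j.val - 1 : ℕ) : ZMod (Ltwo h (i - 1))).val
        = Ltwo h i - j.val - 1 := ZMod.val_cast_of_lt hn2
    rw [step1, tau2]
    rw [if_pos (by rw [hwval]; exact hn1)]
    refine sigma_int_eq h e2 _ ?_
    rw [hwval]
    have key : (-(Ltwo h i - j.val - 1 : ℕ) - 1 : ℤ)
        = ((j.val : ℕ) : ℤ) + (-(Ltwo h i : ℤ)) := by omega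
    rw [key, Int.cast_add, Int.cast_neg, Int.cast_natCast, Int.cast_natCast,
      ZMod.natCast_self, neg_zero, add_zero, ZMod.natCast_val, ZMod.cast_id]
end

section
/- Let f = (h₀,h₁,h₂,q₀,q₁,q₂) ∈ ℱ (in particular q₀,q₁,q₂ all have the same parity). Then for every colour c ∈ {0,1,2,3} and every vertex (i,j) ∈ V(f), the canonical representative of the second coordinate of τ_c(i,j) has parity opposite to that of the canonical representative ĵ of j. Consequently V(f) is partitioned into the vertices with even representative and those with odd representative, every edge of Γ(f) joins the two classes, and Γ(f) is bipartite. -/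
lemma val_intCast_mod2 {n : ℕ} [NeZero n] (hn : 2 ∣ n) (c : ℤ) :
    (((c : ZMod n)).val : ℤ) % 2 = c % 2 := by
  rw [ZMod.val_intCast]
  exact Int.emod_emod_of_dvd c (Int.natCast_dvd_natCast.mpr hn)

lemma elem_eq_intCast {n : ℕ} [NeZero n] (x : ZMod n) : x = ((x.val : ℤ) : ZMod n) := by
  push_cast [ZMod.natCast_val, ZMod.cast_id]
  rfl

lemma add_intCast_val_mod2 {n : ℕ} [NeZero n] (hn : 2 ∣ n) (x : ZMod n) (c : ℤ) :
    (((x + (c : ZMod n)).val : ℤ)) % 2 = ((x.val : ℤ) + c) % 2 := by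
  conv_lhs => rw [elem_eq_intCast x, ← Int.cast_add]
  exact val_intCast_mod2 hn _

lemma sub_intCast_val_mod2 {n : ℕ} [NeZero n] (hn : 2 ∣ n) (x : ZMod n) (c : ℤ) :
    (((x - (c : ZMod n)).val : ℤ)) % 2 = ((x.val : ℤ) - c) % 2 := by
  conv_lhs => rw [elem_eq_intCast x, ← Int.cast_sub]
  exact val_intCast_mod2 hn _



lemma Ltwo_dvd (h q : ZMod 3 → ℕ) (hf : AdmissibleF h q) (i : ZMod 3) : 2 ∣ Ltwo h i := by
  have := (hf.even_sum (i - 1)).two_dvd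
  simpa [Ltwo, sub_add_cancel] using this

lemma Ltwo_nezero (h q : ZMod 3 → ℕ) (hf : AdmissibleF h q) (i : ZMod 3) :
    NeZero (Ltwo h i) := ⟨by have := hf.q_lt i; omega⟩

lemma tau2_parity (h q : ZMod 3 → ℕ) (hf : AdmissibleF h q) (w : Vf h) :
    (tau2 h w).2.val % 2 ≠ w.2.val % 2 := by
  haveI := Ltwo_nezero h q hf
  obtain ⟨i, j⟩ := w
  simp only [tau2]
  rcases lt_or_ge j.val (h i) with hc | hc
  · rw [if_pos hc]
    have := val_intCast_mod2 (n := Ltwo h (i + 1)) (Ltwo_dvd h q hf _) (-(j.val : ℤ) - 1)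
    simp only
    omega
  · rw [if_neg (not_lt.mpr hc)]
    have hlt : j.val < Ltwo h i := ZMod.val_lt j
    have h1 := Ltwo_dvd h q hf i
    have h2 := Ltwo_dvd h q hf (i - 1)
    simp only [ZMod.val_natCast]
    rw [Nat.mod_mod_of_dvd _ h2]
    omega

lemma rho_parity (h q : ZMod 3 → ℕ) (hf : AdmissibleF h q) (w : Vf h) :
    (((rho h q w).2.val : ℤ)) % 2 = ((w.2.val : ℤ) + q w.1) % 2 := by
  haveI := Ltwo_nezero h q hf
  obtain ⟨i, j⟩ := w
  simpa [rho] using add_intCast_val_mod2 (Ltwo_dvd h q hf i) j (q i)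

lemma rhoInv_parity (h q : ZMod 3 → ℕ) (hf : AdmissibleF h q) (w : Vf h) :
    (((rhoInv h q w).2.val : ℤ)) % 2 = ((w.2.val : ℤ) - q w.1) % 2 := by
  haveI := Ltwo_nezero h q hf
  obtain ⟨i, j⟩ := w
  simpa [rhoInv] using sub_intCast_val_mod2 (Ltwo_dvd h q hf i) j (q i)

/-- for every colour `c ∈ {0,1,2,3}` and every vertex `v`, the canonical
representative of the second coordinate of `τ_c(v)` has parity opposite to that of the
representative of the second coordinate of `v`; hence every edge of `Γ(f)` joins the
even-representative class to the odd-representative class and `Γ(f)` is bipartite. -/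
theorem tau_parity_flip_bipartite (h q : ZMod 3 → ℕ) (hf : AdmissibleF h q) :
    ∀ v : Vf h,
      (tau0 h v).2.val % 2 ≠ v.2.val % 2 ∧
      (tau1 h v).2.val % 2 ≠ v.2.val % 2 ∧
      (tau2 h v).2.val % 2 ≠ v.2.val % 2 ∧
      (tau3 h q v).2.val % 2 ≠ v.2.val % 2 := by
  
  haveI := Ltwo_nezero h q hf
  rintro ⟨i, j⟩
  refine ⟨?_, ?_, tau2_parity h q hf _, ?_⟩
  · have key : j + (-1 : ZMod (Ltwo h i)) ^ j.val
        = j + ((((-1 : ℤ) ^ j.val) : ℤ) : ZMod (Ltwo h i)) := by push_cast; ring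
    have h1 := add_intCast_val_mod2 (Ltwo_dvd h q hf i) j ((-1 : ℤ) ^ j.val)
    simp only [tau0, key]
    rcases Nat.even_or_odd j.val with he | ho
    · rw [he.neg_one_pow] at h1 ⊢; omega
    · rw [ho.neg_one_pow] at h1 ⊢; omega
  · have key : j - (-1 : ZMod (Ltwo h i)) ^ j.val
        = j - ((((-1 : ℤ) ^ j.val) : ℤ) : ZMod (Ltwo h i)) := by push_cast; ring
    have h1 := sub_intCast_val_mod2 (Ltwo_dvd h q hf i) j ((-1 : ℤ) ^ j.val)
    simp only [tau1, key]
    rcases Nat.even_or_odd j.val with he | ho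
    · rw [he.neg_one_pow] at h1 ⊢; omega
    · rw [ho.neg_one_pow] at h1 ⊢; omega
  · have h1 := rhoInv_parity h q hf ⟨i, j⟩
    have h2 := tau2_parity h q hf (rhoInv h q ⟨i, j⟩)
    have h3 := rho_parity h q hf (tau2 h (rhoInv h q ⟨i, j⟩))
    have h4 : q (tau2 h (rhoInv h q ⟨i, j⟩)).1 % 2 = q i % 2 := hf.parity _ _
    simp only [tau3, Function.comp_apply] at *
    omega
end

section
/- Let f = (h₀,h₁,h₂,q₀,q₁,q₂) ∈ ℱ. Then N₀₁ = N₁₀: after removing the cycle C₂ and merging at each vertex of C₂ its 2-edge with its 3-edge, the number of merged arcs joining C₀⁺ (upwards) to C₁⁻ (downwards) equals the number of merged arcs joining C₁⁺ to C₀⁻ — 'the two last kind of arcs are in the same quantity'. -/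
/-- `Nab h q a b` is the number of `j ∈ ℤ/(2l₂)` such that the first coordinate of
`τ₂(2,j)` equals `a` and the first coordinate of `τ₃(2,j)` equals `b`: the number of
merged arcs of the rich Heegaard diagram joining the circle `C_a⁺` to `C_b⁻`
after removing the cycle `C₂`. -/
noncomputable def Nab (h q : ZMod 3 → ℕ) (a b : ZMod 3) : ℕ :=
  Nat.card {j : ZMod (Ltwo h 2) // (tau2 h ⟨2, j⟩).1 = a ∧ (tau3 h q ⟨2, j⟩).1 = b}

/-- For a bijection `σ` of a finite type and a predicate `P`, the number of points where
`P` holds but fails after `σ` equals the number where it fails but holds after `σ`. -/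
lemma key_count {α : Type*} [Fintype α] [DecidableEq α] (σ : α ≃ α) (P : α → Prop)
    [DecidablePred P] :
    Nat.card {x // P x ∧ ¬ P (σ x)} = Nat.card {x // ¬ P x ∧ P (σ x)} := by
  classical
  rw [Nat.card_eq_fintype_card, Nat.card_eq_fintype_card, Fintype.card_subtype,
    Fintype.card_subtype]
  set A := Finset.univ.filter P with hA
  set B := Finset.univ.filter (fun x => P (σ x)) with hB
  have hAB : B.card = A.card := by
    apply Finset.card_bij (fun x _ => σ x)
    · intro a ha; simp [hA, hB] at *; exact ha
    · intro a _ b _ hab; exact σ.injective hab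
    · intro b hb
      refine ⟨σ.symm b, ?_, by simp⟩
      simp [hA, hB] at *; simpa using hb
  have h1 : (Finset.univ.filter fun x => P x ∧ ¬P (σ x)) = A \ B := by
    ext x; simp [hA, hB]
  have h2 : (Finset.univ.filter fun x => ¬P x ∧ P (σ x)) = B \ A := by
    ext x; simp [hA, hB, and_comm]
  rw [h1, h2]
  have e1 := Finset.card_inter_add_card_sdiff A B
  have e2 := Finset.card_inter_add_card_sdiff B A
  rw [Finset.inter_comm] at e2
  omega

/-- The first coordinate of `τ₂(2,j)` is `0` if `ĵ < h₂` and `1` otherwise. -/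
lemma tau2_fst (h : ZMod 3 → ℕ) (j : ZMod (Ltwo h 2)) :
    (tau2 h ⟨2, j⟩).1 = if j.val < h 2 then 0 else 1 := by
  simp only [tau2]
  split <;> rfl

/-- The first coordinate of `τ₃(2,j)` is `0` if `(j−q₂)̂ < h₂` and `1` otherwise. -/
lemma tau3_fst (h q : ZMod 3 → ℕ) (j : ZMod (Ltwo h 2)) :
    (tau3 h q ⟨2, j⟩).1 = if (j - (q 2 : ZMod (Ltwo h 2))).val < h 2 then 0 else 1 := by
  simp only [tau3, Function.comp, rhoInv, tau2]
  by_cases hc : (j - (q 2 : ZMod (Ltwo h 2))).val < h 2 <;> simp [rho, hc] <;> decide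

/-- `N₀₁ = N₁₀`: after removing the cycle `C₂` and merging at each of its
vertices its 2-edge with its 3-edge, the number of merged arcs joining `C₀⁺` to `C₁⁻`
equals the number of merged arcs joining `C₁⁺` to `C₀⁻`. -/
theorem merged_arcs_symmetric (h q : ZMod 3 → ℕ) (hf : AdmissibleF h q) :
    Nab h q 0 1 = Nab h q 1 0 := by
  classical
  have hn : 0 < Ltwo h 2 := lt_of_le_of_lt (Nat.zero_le _) (hf.q_lt 2)
  haveI : NeZero (Ltwo h 2) := ⟨hn.ne'⟩
  have e01 : Nab h q 0 1 =
      Nat.card {j : ZMod (Ltwo h 2) // j.val < h 2 ∧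
        ¬ ((Equiv.subRight ((q 2 : ZMod (Ltwo h 2)))) j).val < h 2} := by
    apply Nat.card_congr
    apply Equiv.subtypeEquivRight
    intro j
    rw [tau2_fst, tau3_fst]
    by_cases h1 : j.val < h 2 <;>
      by_cases h2 : (j - (q 2 : ZMod (Ltwo h 2))).val < h 2 <;>
        simp [h1, h2, Equiv.subRight] <;> decide
  have e10 : Nab h q 1 0 =
      Nat.card {j : ZMod (Ltwo h 2) // ¬ j.val < h 2 ∧
        ((Equiv.subRight ((q 2 : ZMod (Ltwo h 2)))) j).val < h 2} := by
    apply Nat.card_congr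
    apply Equiv.subtypeEquivRight
    intro j
    rw [tau2_fst, tau3_fst]
    by_cases h1 : j.val < h 2 <;>
      by_cases h2 : (j - (q 2 : ZMod (Ltwo h 2))).val < h 2 <;>
        simp [h1, h2, Equiv.subRight] <;> decide
  rw [e01, e10]
  exact key_count (Equiv.subRight ((q 2 : ZMod (Ltwo h 2)))) (fun j => j.val < h 2)
end

section
/- Let f = (h₀,h₁,h₂,q₀,q₁,q₂) ∈ ℱ. Then the marginal totals of the merged-arc counts are: N₀₀ + N₀₁ = h₂ and N₀₀ + N₁₀ = h₂ (exactly h₂ arcs issue from C₀⁺ and exactly h₂ arrive at C₀⁻), and N₁₀ + N₁₁ = h₁ and N₀₁ + N₁₁ = h₁ (exactly h₁ arcs issue from C₁⁺ and exactly h₁ arrive at C₁⁻). -/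
lemma count_val_lt (n m : ℕ) [NeZero n] (hm : m ≤ n) :
    (Finset.univ.filter fun j : ZMod n => j.val < m).card = m := by
  refine Eq.trans ?_ (Finset.card_range m)
  refine Finset.card_bij' (fun j _ => j.val) (fun a _ => (a : ZMod n)) ?_ ?_ ?_ ?_
  · intro j hj; simp only [Finset.mem_filter] at hj; simpa using hj.2
  · intro a ha; simp only [Finset.mem_range] at ha
    simp [Finset.mem_filter, ZMod.val_cast_of_lt (lt_of_lt_of_le ha hm), ha]
  · intro j _; simp [ZMod.natCast_val, ZMod.cast_id]
  · intro a ha; simp only [Finset.mem_range] at ha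
    exact ZMod.val_cast_of_lt (lt_of_lt_of_le ha hm)

lemma count_shift (n m : ℕ) [NeZero n] (c : ZMod n) :
    (Finset.univ.filter fun j : ZMod n => (j - c).val < m).card
      = (Finset.univ.filter fun j : ZMod n => j.val < m).card := by
  refine Finset.card_bij' (fun j _ => j - c) (fun j _ => j + c) ?_ ?_ ?_ ?_
  · intro j hj; simp only [Finset.mem_filter] at hj ⊢; exact ⟨Finset.mem_univ _, hj.2⟩
  · intro j hj; simp only [Finset.mem_filter] at hj ⊢
    simpa using hj.2
  · intro j _; ring
  · intro j _; ring

lemma rho_fst (h q : ZMod 3 → ℕ) (x : Vf h) : (rho h q x).1 = x.1 := by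
  obtain ⟨i, j⟩ := x; rfl

/-- marginal totals of the merged-arc counts: `N₀₀ + N₀₁ = h₂`,
`N₀₀ + N₁₀ = h₂`, `N₁₀ + N₁₁ = h₁` and `N₀₁ + N₁₁ = h₁`. -/
theorem merged_arcs_marginals (h q : ZMod 3 → ℕ) (hf : AdmissibleF h q) :
    Nab h q 0 0 + Nab h q 0 1 = h 2 ∧
    Nab h q 0 0 + Nab h q 1 0 = h 2 ∧
    Nab h q 1 0 + Nab h q 1 1 = h 1 ∧
    Nab h q 0 1 + Nab h q 1 1 = h 1 := by
  classical
  have hnz : Ltwo h 2 ≠ 0 := by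
    intro h0
    have h1z : h 1 = 0 := by
      have : h (2 - 1) + h 2 = 0 := h0
      have e : (2 - 1 : ZMod 3) = 1 := by decide
      rw [e] at this; omega
    have h2z : h 2 = 0 := by
      have : h (2 - 1) + h 2 = 0 := h0
      omega
    have := hf.zero_unique 1 2 h1z h2z
    exact absurd this (by decide)
  haveI : NeZero (Ltwo h 2) := ⟨hnz⟩
  have hle : h 2 ≤ Ltwo h 2 := by
    have e : (2 - 1 : ZMod 3) = 1 := by decide
    unfold Ltwo; rw [e]; omega
  set c : ZMod (Ltwo h 2) := (q 2 : ZMod (Ltwo h 2)) with hc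
  have key : ∀ a b : ZMod 3, Nab h q a b =
      (Finset.univ.filter fun j : ZMod (Ltwo h 2) =>
        (if j.val < h 2 then (0 : ZMod 3) else 1) = a ∧
        (if (j - c).val < h 2 then (0 : ZMod 3) else 1) = b).card := by
    intro a b
    rw [Nab, Nat.card_eq_fintype_card, Fintype.card_subtype]
    congr 1
    ext j
    simp only [tau2_fst, tau3_fst]
    exact Iff.rfl
  have h01 : (1 : ZMod 3) ≠ 0 := by decide
  have h10 : (0 : ZMod 3) ≠ 1 := by decide
  have e00 : ∀ j : ZMod (Ltwo h 2),
      ((if j.val < h 2 then (0 : ZMod 3) else 1) = 0) ↔ j.val < h 2 := by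
    intro j; split <;> simp_all
  have e01 : ∀ j : ZMod (Ltwo h 2),
      ((if j.val < h 2 then (0 : ZMod 3) else 1) = 1) ↔ ¬ j.val < h 2 := by
    intro j; split <;> simp_all
  have e10 : ∀ j : ZMod (Ltwo h 2),
      ((if (j - c).val < h 2 then (0 : ZMod 3) else 1) = 0) ↔ (j - c).val < h 2 := by
    intro j; split <;> simp_all
  have e11 : ∀ j : ZMod (Ltwo h 2),
      ((if (j - c).val < h 2 then (0 : ZMod 3) else 1) = 1) ↔ ¬ (j - c).val < h 2 := by
    intro j; split <;> simp_all
  have cardP : (Finset.univ.filter fun j : ZMod (Ltwo h 2) => j.val < h 2).card = h 2 :=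
    count_val_lt _ _ hle
  have cardQ : (Finset.univ.filter fun j : ZMod (Ltwo h 2) => (j - c).val < h 2).card
      = h 2 := (count_shift _ _ c).trans cardP
  have cardtot : (Finset.univ : Finset (ZMod (Ltwo h 2))).card = Ltwo h 2 := by
    simp [ZMod.card]
  have hL : Ltwo h 2 = h 1 + h 2 := by
    have e : (2 - 1 : ZMod 3) = 1 := by decide
    unfold Ltwo; rw [e]
  have split1 : ∀ (P Q : ZMod (Ltwo h 2) → Prop) [DecidablePred P] [DecidablePred Q],
      (Finset.univ.filter fun j => P j ∧ Q j).card
        + (Finset.univ.filter fun j => P j ∧ ¬ Q j).card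
        = (Finset.univ.filter fun j => P j).card := by
    intro P Q _ _
    rw [← Finset.filter_filter, ← Finset.filter_filter,
      Finset.card_filter_add_card_filter_not]
  refine ⟨?_, ?_, ?_, ?_⟩
  · rw [key 0 0, key 0 1]
    simp only [e00, e01, e10, e11]
    rw [split1 (fun j => j.val < h 2) (fun j => (j - c).val < h 2)]
    exact cardP
  · rw [key 0 0, key 1 0]
    simp only [e00, e01, e10, e11]
    have comm : ∀ j : ZMod (Ltwo h 2),
        ((¬ j.val < h 2) ∧ (j - c).val < h 2) ↔ ((j - c).val < h 2 ∧ ¬ j.val < h 2) := by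
      intro j; tauto
    have comm2 : ∀ j : ZMod (Ltwo h 2),
        (j.val < h 2 ∧ (j - c).val < h 2) ↔ ((j - c).val < h 2 ∧ j.val < h 2) := by
      intro j; tauto
    simp only [comm, comm2]
    rw [split1 (fun j => (j - c).val < h 2) (fun j => j.val < h 2)]
    exact cardQ
  · rw [key 1 0, key 1 1]
    simp only [e00, e01, e10, e11]
    rw [split1 (fun j => ¬ j.val < h 2) (fun j => (j - c).val < h 2)]
    have := Finset.card_filter_add_card_filter_not
      (s := (Finset.univ : Finset (ZMod (Ltwo h 2)))) (p := fun j => j.val < h 2)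
    omega
  · rw [key 0 1, key 1 1]
    simp only [e00, e01, e10, e11]
    have comm : ∀ j : ZMod (Ltwo h 2),
        (j.val < h 2 ∧ ¬ (j - c).val < h 2) ↔ (¬ (j - c).val < h 2 ∧ j.val < h 2) := by
      intro j; tauto
    have comm2 : ∀ j : ZMod (Ltwo h 2),
        ((¬ j.val < h 2) ∧ ¬ (j - c).val < h 2) ↔ (¬ (j - c).val < h 2 ∧ ¬ j.val < h 2) := by
      intro j; tauto
    simp only [comm, comm2]
    rw [split1 (fun j => ¬ (j - c).val < h 2) (fun j => j.val < h 2)]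
    have := Finset.card_filter_add_card_filter_not
      (s := (Finset.univ : Finset (ZMod (Ltwo h 2)))) (p := fun j => (j - c).val < h 2)
    omega
end

section
/- (Combinatorial content of Proposition 3.1, case 1.) Let f = (h₀,h₁,h₂,q₀,q₁,q₂) ∈ ℱ with q₂ < h₁ and q₂ < h₂. Then the merged-arc counts of the rich Heegaard diagram R_f are N₁₀ = N₀₁ = q₂ (= b), N₀₀ = h₂ − q₂ (= c) and N₁₁ = h₁ − q₂ (= d); together with the a = h₀ 2-edges (and h₀ 3-edges) joining C₀ and C₁ directly, these are the parameters a, b, c, d of Fig. 5(a). -/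
lemma card_val_filter (n : ℕ) [NeZero n] (P : ℕ → Prop) [DecidablePred P] :
    Nat.card {j : ZMod n // P j.val} = ((Finset.range n).filter P).card := by
  rw [Nat.card_eq_fintype_card, Fintype.card_subtype]
  refine Finset.card_bij (fun j _ => j.val) ?_ ?_ ?_
  · intro j hj
    simp only [Finset.mem_filter, Finset.mem_univ, true_and] at hj
    simp [Finset.mem_filter, Finset.mem_range, j.val_lt, hj]
  · intro a _ b _ hab; exact ZMod.val_injective n hab
  · intro m hm
    simp only [Finset.mem_filter, Finset.mem_range] at hm
    exact ⟨(m : ZMod n), by simp [ZMod.val_cast_of_lt hm.1, hm.2],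
      ZMod.val_cast_of_lt hm.1⟩

lemma count_Ico (n lo hi : ℕ) [NeZero n] (P : ZMod n → Prop)
    (hP : ∀ j : ZMod n, P j ↔ lo ≤ j.val ∧ j.val < hi) (hhi : hi ≤ n) :
    Nat.card {j : ZMod n // P j} = hi - lo := by
  classical
  rw [Nat.card_congr (Equiv.subtypeEquivRight hP),
    card_val_filter n (fun m => lo ≤ m ∧ m < hi)]
  rw [show (Finset.range n).filter (fun m => lo ≤ m ∧ m < hi) = Finset.Ico lo hi by
    ext m; simp [Finset.mem_filter, Finset.mem_range, Finset.mem_Ico]; omega]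
  exact Nat.card_Ico lo hi

lemma card_sub_pred (n : ℕ) (c : ZMod n) (P : ZMod n → Prop) :
    Nat.card {j : ZMod n // P (j - c)} = Nat.card {j : ZMod n // P j} :=
  Nat.card_congr (Equiv.subtypeEquiv (Equiv.subRight c) (fun _ => Iff.rfl))

lemma sub_val_eq (n : ℕ) [NeZero n] (c : ℕ) (hc : c ≤ n) (j : ZMod n) :
    (j - (c : ZMod n)).val = (j.val + (n - c)) % n := by
  have : j - (c : ZMod n) = ((j.val + (n - c) : ℕ) : ZMod n) := by
    push_cast [Nat.cast_sub hc]
    simp [ZMod.natCast_self, ZMod.natCast_val, ZMod.cast_id]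
    ring
  rw [this, ZMod.val_natCast]

lemma tau2_fst_two (h : ZMod 3 → ℕ) (j : ZMod (Ltwo h 2)) :
    (tau2 h ⟨2, j⟩).1 = if j.val < h 2 then (0 : ZMod 3) else 1 := by
  simp only [tau2]; split <;> simp <;> decide

lemma tau3_fst_two (h q : ZMod 3 → ℕ) (j : ZMod (Ltwo h 2)) :
    (tau3 h q ⟨2, j⟩).1 =
      if (j - (q 2 : ZMod (Ltwo h 2))).val < h 2 then (0 : ZMod 3) else 1 := by
  simp only [tau3, Function.comp, rhoInv, tau2]
  split <;> simp [rho, *] <;> decide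

lemma tau2_fst_zero (h : ZMod 3 → ℕ) (j : ZMod (Ltwo h 0)) :
    (tau2 h ⟨0, j⟩).1 = if j.val < h 0 then (1 : ZMod 3) else 2 := by
  simp only [tau2]; split <;> simp <;> decide

lemma tau3_fst_zero (h q : ZMod 3 → ℕ) (j : ZMod (Ltwo h 0)) :
    (tau3 h q ⟨0, j⟩).1 =
      if (j - (q 0 : ZMod (Ltwo h 0))).val < h 0 then (1 : ZMod 3) else 2 := by
  simp only [tau3, Function.comp, rhoInv, tau2]
  split <;> simp [rho, *] <;> decide
/-- Proposition 3.1, case 1: if `q₂ < h₁` and `q₂ < h₂`, then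
`N₁₀ = N₀₁ = q₂ (= b)`, `N₀₀ = h₂ − q₂ (= c)` and `N₁₁ = h₁ − q₂ (= d)`; moreover
`a = h₀` 2-edges (and `h₀` 3-edges) join `C₀` and `C₁` directly. -/
theorem prop_case1 (h q : ZMod 3 → ℕ) (hf : AdmissibleF h q)
    (hq1 : q 2 < h 1) (hq2 : q 2 < h 2) :
    Nab h q 1 0 = q 2 ∧ Nab h q 0 1 = q 2 ∧
    Nab h q 0 0 = h 2 - q 2 ∧ Nab h q 1 1 = h 1 - q 2 ∧
    Nat.card {j : ZMod (Ltwo h 0) // (tau2 h ⟨0, j⟩).1 = 1} = h 0 ∧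
    Nat.card {j : ZMod (Ltwo h 0) // (tau3 h q ⟨0, j⟩).1 = 1} = h 0 := by
  have hL2 : Ltwo h 2 = h 1 + h 2 := by
    rw [show Ltwo h 2 = h (2 - 1) + h 2 from rfl, show (2 - 1 : ZMod 3) = 1 from by decide]
  have hL0 : Ltwo h 0 = h 2 + h 0 := by
    rw [show Ltwo h 0 = h (0 - 1) + h 0 from rfl, show (0 - 1 : ZMod 3) = 2 from by decide]
  haveI : NeZero (Ltwo h 2) := ⟨by omega⟩
  haveI : NeZero (Ltwo h 0) := ⟨by omega⟩
  -- key characterization of (j - q2).val < h 2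
  have hsub : ∀ j : ZMod (Ltwo h 2),
      (j - (q 2 : ZMod (Ltwo h 2))).val < h 2 ↔ q 2 ≤ j.val ∧ j.val < h 2 + q 2 := by
    intro j
    have hj := j.val_lt
    rw [sub_val_eq (Ltwo h 2) (q 2) (by omega) j]
    rcases le_or_gt (q 2) j.val with hc | hc
    · rw [Nat.mod_eq_sub_mod (by omega),
        show j.val + (Ltwo h 2 - q 2) - Ltwo h 2 = j.val - q 2 by omega,
        Nat.mod_eq_of_lt (by omega)]
      omega
    · rw [Nat.mod_eq_of_lt (by omega)]; omega
  have key : ∀ (a b : ZMod 3) (lo hi : ℕ), hi ≤ Ltwo h 2 →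
      (∀ m : ℕ, m < Ltwo h 2 →
        (((if m < h 2 then (0 : ZMod 3) else 1) = a ∧
          (if q 2 ≤ m ∧ m < h 2 + q 2 then (0 : ZMod 3) else 1) = b) ↔
          (lo ≤ m ∧ m < hi))) →
      Nab h q a b = hi - lo := by
    intro a b lo hi hhi hiff
    refine count_Ico _ lo hi _ (fun j => ?_) hhi
    rw [tau2_fst_two h j, tau3_fst_two h q j, if_congr (hsub j) rfl rfl]
    exact hiff j.val j.val_lt
  refine ⟨?_, ?_, ?_, ?_, ?_, ?_⟩
  · have hiff : ∀ m : ℕ, m < Ltwo h 2 →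
        (((if m < h 2 then (0 : ZMod 3) else 1) = 1 ∧
          (if q 2 ≤ m ∧ m < h 2 + q 2 then (0 : ZMod 3) else 1) = 0) ↔
          (h 2 ≤ m ∧ m < h 2 + q 2)) := by
      intro m hm; split_ifs with h1 h2 <;>
        simp (config := { decide := true }) <;> omega
    rw [key 1 0 (h 2) (h 2 + q 2) (by omega) hiff]; try omega
  · have hiff : ∀ m : ℕ, m < Ltwo h 2 →
        (((if m < h 2 then (0 : ZMod 3) else 1) = 0 ∧
          (if q 2 ≤ m ∧ m < h 2 + q 2 then (0 : ZMod 3) else 1) = 1) ↔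
          (0 ≤ m ∧ m < q 2)) := by
      intro m hm; split_ifs with h1 h2 <;>
        simp (config := { decide := true }) <;> omega
    rw [key 0 1 0 (q 2) (by omega) hiff]; try omega
  · have hiff : ∀ m : ℕ, m < Ltwo h 2 →
        (((if m < h 2 then (0 : ZMod 3) else 1) = 0 ∧
          (if q 2 ≤ m ∧ m < h 2 + q 2 then (0 : ZMod 3) else 1) = 0) ↔
          (q 2 ≤ m ∧ m < h 2)) := by
      intro m hm; split_ifs with h1 h2 <;>
        simp (config := { decide := true }) <;> omega
    rw [key 0 0 (q 2) (h 2) (by omega) hiff]; try omega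
  · have hiff : ∀ m : ℕ, m < Ltwo h 2 →
        (((if m < h 2 then (0 : ZMod 3) else 1) = 1 ∧
          (if q 2 ≤ m ∧ m < h 2 + q 2 then (0 : ZMod 3) else 1) = 1) ↔
          (h 2 + q 2 ≤ m ∧ m < Ltwo h 2)) := by
      intro m hm; split_ifs with h1 h2 <;>
        simp (config := { decide := true }) <;> omega
    rw [key 1 1 (h 2 + q 2) (Ltwo h 2) le_rfl hiff]; try omega
  · have hiff : ∀ j : ZMod (Ltwo h 0),
        (tau2 h ⟨0, j⟩).1 = 1 ↔ 0 ≤ j.val ∧ j.val < h 0 := by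
      intro j; rw [tau2_fst_zero h j]
      split_ifs with h1 <;> simp (config := { decide := true }) <;> omega
    rw [count_Ico (Ltwo h 0) 0 (h 0) _ hiff (by omega)]; omega
  · have hiff : ∀ j : ZMod (Ltwo h 0),
        (tau3 h q ⟨0, j⟩).1 = 1 ↔ (j - (q 0 : ZMod (Ltwo h 0))).val < h 0 := by
      intro j; rw [tau3_fst_zero h q j]
      split_ifs with h1 <;> simp (config := { decide := true }) [h1]
    rw [Nat.card_congr (Equiv.subtypeEquivRight hiff),
      card_sub_pred (Ltwo h 0) _ (fun x => x.val < h 0),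
      count_Ico (Ltwo h 0) 0 (h 0) _ (fun j => by omega) (by omega)]
    omega
end

section
/- (Combinatorial content of Proposition 3.1, case 2.) Let f = (h₀,h₁,h₂,q₀,q₁,q₂) ∈ ℱ with h₂ ≤ q₂ ≤ h₁. Then the merged-arc counts of the rich Heegaard diagram R_f are N₁₀ = N₀₁ = h₂ (= b: all h₂ lower arcs issuing from C₀⁻ go to upper arcs of C₁⁺, and symmetrically), N₀₀ = 0, and N₁₁ = h₁ − h₂ (which splits geometrically as c + d with c = q₂ − h₂ and d = h₁ − q₂). -/
lemma card_zmod_subtype (L : ℕ) [NeZero L] (P : ℕ → Prop) [DecidablePred P] :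
    Nat.card {j : ZMod L // P j.val} = ((Finset.range L).filter P).card := by
  rw [Nat.card_eq_fintype_card, Fintype.card_subtype]
  refine Finset.card_bij (fun j _ => j.val) ?_ ?_ ?_
  · intro j hj
    simp only [Finset.mem_filter, Finset.mem_univ, true_and] at hj ⊢
    exact ⟨Finset.mem_range.2 (ZMod.val_lt j), hj⟩
  · intro a _ b _ hab
    exact ZMod.val_injective L hab
  · intro n hn
    simp only [Finset.mem_filter, Finset.mem_range] at hn
    exact ⟨(n : ZMod L), by simp [Finset.mem_filter, ZMod.val_cast_of_lt hn.1, hn.2],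
      ZMod.val_cast_of_lt hn.1⟩


/-- Proposition 3.1, case 2: if `h₂ ≤ q₂ ≤ h₁`, then
`N₁₀ = N₀₁ = h₂ (= b)`, `N₀₀ = 0` and `N₁₁ = h₁ − h₂`, which splits geometrically as
`c + d` with `c = q₂ − h₂` and `d = h₁ − q₂`. -/
theorem prop_case2 (h q : ZMod 3 → ℕ) (hf : AdmissibleF h q)
    (hq1 : h 2 ≤ q 2) (hq2 : q 2 ≤ h 1) :
    Nab h q 1 0 = h 2 ∧ Nab h q 0 1 = h 2 ∧
    Nab h q 0 0 = 0 ∧ Nab h q 1 1 = h 1 - h 2 ∧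
    h 1 - h 2 = (q 2 - h 2) + (h 1 - q 2) := by
  classical
  set L := Ltwo h 2 with hLdef
  have hL : L = h 1 + h 2 := by
    have : (2 - 1 : ZMod 3) = 1 := by decide
    simp [hLdef, Ltwo, this]
  have hqL : q 2 < L := hf.q_lt 2
  haveI : NeZero L := ⟨by omega⟩
  -- first coordinate of tau2
  have t2fst : ∀ j : ZMod L, (tau2 h ⟨2, j⟩).1 = if j.val < h 2 then (0 : ZMod 3) else 1 := by
    intro j
    simp only [tau2]
    split_ifs with hc
    · show (2 + 1 : ZMod 3) = 0; decide
    · show (2 - 1 : ZMod 3) = 1; decide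
  have t3fst : ∀ j : ZMod L,
      (tau3 h q ⟨2, j⟩).1 = if (j - (q 2 : ZMod L)).val < h 2 then (0 : ZMod 3) else 1 := by
    intro j
    simp only [tau3, Function.comp_apply, rhoInv, tau2]
    split_ifs with hc
    · simp only [hc, ↓reduceIte]
      simp only [rho]
      decide
    · simp only [hc, ↓reduceIte]
      simp only [rho]
      decide
  -- value of the shifted index
  have hsub : ∀ j : ZMod L, (j - (q 2 : ZMod L)).val = (j.val + (L - q 2)) % L := by
    intro j
    have e0 : ((L - q 2 : ℕ) : ZMod L) = - (q 2 : ZMod L) := by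
      have e1 : ((L - q 2 : ℕ) : ZMod L) + (q 2 : ZMod L) = 0 := by
        rw [← Nat.cast_add, Nat.sub_add_cancel hqL.le]
        exact ZMod.natCast_self L
      linear_combination e1
    have e2 : j - (q 2 : ZMod L) = j + ((L - q 2 : ℕ) : ZMod L) := by rw [e0]; ring
    rw [e2, ZMod.val_add, ZMod.val_natCast, Nat.add_mod, Nat.mod_mod_of_dvd _ dvd_rfl,
      ← Nat.add_mod]
  have key : ∀ n, n < L → ((n + (L - q 2)) % L < h 2 ↔ q 2 ≤ n ∧ n < q 2 + h 2) := by
    intro n hn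
    rcases lt_or_ge n (q 2) with hc | hc
    · have hlt : n + (L - q 2) < L := by omega
      rw [Nat.mod_eq_of_lt hlt]
      omega
    · have he : n + (L - q 2) = L + (n - q 2) := by omega
      rw [he, Nat.add_mod_left, Nat.mod_eq_of_lt (by omega : n - q 2 < L)]
      omega
  -- master counting formula
  have main : ∀ a b : ZMod 3,
      Nab h q a b = ((Finset.range L).filter
        (fun n => (if n < h 2 then (0 : ZMod 3) else 1) = a ∧
                  (if q 2 ≤ n ∧ n < q 2 + h 2 then (0 : ZMod 3) else 1) = b)).card := by
    intro a b
    rw [Nab, ← card_zmod_subtype L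
      (fun n => (if n < h 2 then (0 : ZMod 3) else 1) = a ∧
                (if q 2 ≤ n ∧ n < q 2 + h 2 then (0 : ZMod 3) else 1) = b)]
    apply Nat.card_congr
    apply Equiv.subtypeEquivRight
    intro j
    rw [t2fst j, t3fst j, hsub j]
    simp only [key j.val (ZMod.val_lt j)]
  have hif0 : ∀ (P : Prop) (inst : Decidable P), ((if P then (0 : ZMod 3) else 1) = 0) ↔ P := by
    intro P inst; split_ifs with hp <;> simp [hp]
  have hif1 : ∀ (P : Prop) (inst : Decidable P), ((if P then (0 : ZMod 3) else 1) = 1) ↔ ¬P := by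
    intro P inst; split_ifs with hp <;> simp [hp]
  refine ⟨?_, ?_, ?_, ?_, by omega⟩
  · rw [main 1 0]
    have e : ((Finset.range L).filter
        (fun n => (if n < h 2 then (0 : ZMod 3) else 1) = 1 ∧
                  (if q 2 ≤ n ∧ n < q 2 + h 2 then (0 : ZMod 3) else 1) = 0))
        = Finset.Ico (q 2) (q 2 + h 2) := by
      ext n
      simp only [Finset.mem_filter, Finset.mem_range, Finset.mem_Ico, hif0, hif1]
      omega
    rw [e, Nat.card_Ico]; omega
  · rw [main 0 1]
    have e : ((Finset.range L).filter
        (fun n => (if n < h 2 then (0 : ZMod 3) else 1) = 0 ∧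
                  (if q 2 ≤ n ∧ n < q 2 + h 2 then (0 : ZMod 3) else 1) = 1))
        = Finset.range (h 2) := by
      ext n
      simp only [Finset.mem_filter, Finset.mem_range, hif0, hif1]
      omega
    rw [e, Finset.card_range]
  · rw [main 0 0]
    have e : ((Finset.range L).filter
        (fun n => (if n < h 2 then (0 : ZMod 3) else 1) = 0 ∧
                  (if q 2 ≤ n ∧ n < q 2 + h 2 then (0 : ZMod 3) else 1) = 0)) = ∅ := by
      ext n
      simp only [Finset.mem_filter, Finset.mem_range, Finset.notMem_empty, iff_false,
        hif0, not_and]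
      omega
    rw [e, Finset.card_empty]
  · rw [main 1 1]
    have e : ((Finset.range L).filter
        (fun n => (if n < h 2 then (0 : ZMod 3) else 1) = 1 ∧
                  (if q 2 ≤ n ∧ n < q 2 + h 2 then (0 : ZMod 3) else 1) = 1))
        = Finset.Ico (h 2) (q 2) ∪ Finset.Ico (q 2 + h 2) L := by
      ext n
      simp only [Finset.mem_filter, Finset.mem_range, Finset.mem_union, Finset.mem_Ico,
        hif1, not_and, not_lt]
      omega
    rw [e, Finset.card_union_of_disjoint (by
      simp only [Finset.disjoint_left, Finset.mem_Ico]
      intro n hn hn'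
      omega), Nat.card_Ico, Nat.card_Ico]
    omega
end
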